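/- arXiv:2304.08330 — 6 statements merged into one kernel-verified Lean document; each statement's English description precedes it below -/
import Mathlib

section
/- Let (X, 𝒜, P) be a probability space, let f, f̂ : X → ℝ be measurable functions, let λ ≥ 0, let ε ∈ (0,1], and let ζ ∈ ℝ. Assume that f̂ is a PAC approximation of f with margin λ and error rate ε with respect to P, i.e. P({x ∈ X : |f̂(x) − f(x)| ≤ λ}) ≥ 1 − ε. If P({x ∈ X : f̂(x) − λ > ζ}) > ε, then there exists a point x ∈ X such that f(x) > ζ. -/
open MeasureTheory

/-- Second half of Lemma 2: if `f̂` is a PAC approximation of `f` with margin `λ` and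
error rate `ε` w.r.t. the probability measure `P`, and `P {x | f̂ x - λ > ζ} > ε`,
then there exists a counterexample point `x` with `f x > ζ`. -/
theorem stmt1 {X : Type*} [MeasurableSpace X] (P : Measure X) [IsProbabilityMeasure P]
    (f fhat : X → ℝ) (hf : Measurable f) (hfhat : Measurable fhat)
    (lam : ℝ) (hlam : 0 ≤ lam) (eps : ℝ) (heps : eps ∈ Set.Ioc (0 : ℝ) 1) (zeta : ℝ)
    (hPAC : ENNReal.ofReal (1 - eps) ≤ P {x | |fhat x - f x| ≤ lam})
    (hunsafe : ENNReal.ofReal eps < P {x | fhat x - lam > zeta}) :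
    ∃ x, f x > zeta := by
  set A := {x | |fhat x - f x| ≤ lam}
  set B := {x | fhat x - lam > zeta}
  have hAmeas : MeasurableSet A := by
    apply measurableSet_le (by measurability) measurable_const
  have hBmeas : MeasurableSet B := by
    apply measurableSet_lt measurable_const (by measurability)
  have hsum : (1 : ENNReal) < P A + P B := by
    calc (1 : ENNReal) = ENNReal.ofReal (1 - eps) + ENNReal.ofReal eps := by
          rw [← ENNReal.ofReal_add (by linarith [heps.2]) (le_of_lt heps.1)]
          simp
      _ < P A + P B := ENNReal.add_lt_add_of_le_of_lt
          (ne_of_lt (lt_of_le_of_lt hPAC (measure_lt_top P A))) hPAC hunsafe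
  have hinter : (0 : ENNReal) < P (A ∩ B) := by
    by_contra h
    push_neg at h
    have h0 : P (A ∩ B) = 0 := le_antisymm h zero_le
    have := measure_union_add_inter A hBmeas (μ := P)
    have hle : P (A ∪ B) ≤ 1 := prob_le_one
    rw [h0, add_zero] at this
    rw [this] at hle
    exact absurd hsum (not_lt.mpr hle)
  obtain ⟨x, hxA, hxB⟩ := nonempty_of_measure_ne_zero (ne_of_gt hinter)
  have h1 : |fhat x - f x| ≤ lam := hxA
  have h2 : fhat x - lam > zeta := hxB
  have := abs_le.mp h1
  exact ⟨x, by linarith [this.1]⟩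
end

section
/- Let X ⊆ ℝⁿ be a Lebesgue-measurable set of finite positive Lebesgue measure |X|. Let f, f̂ : ℝⁿ → ℝ be measurable, let M ≥ 0 satisfy 0 ≤ f(x) ≤ M for all x ∈ X, let f̂ be such that |f̂ − β|^p is integrable on X, let λ ≥ 0, ε ∈ [0,1], p ≥ 1, and β ≥ 0. Assume that the Lebesgue measure of {x ∈ X : |f̂(x) − f(x)| ≤ λ} is at least (1 − ε)·|X|. Then (∫_X |f(x) − β|^p dx)^{1/p} ≤ ( ( λ·((1 − ε)·|X|)^{1/p} + (∫_X |f̂(x) − β|^p dx)^{1/p} )^p + ε·|X|·max(|M − β|^p, β^p) )^{1/p}. -/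
open MeasureTheory

/-- Key inequality in the proof of Lemma 3: for a PAC approximation `f̂` of `f` with
margin `λ` and error rate `ε` w.r.t. the uniform distribution on a measurable set
`X ⊆ ℝⁿ` of finite positive Lebesgue measure, the `L^p` distance of `f` from `β` on `X`
is bounded by the expression computed from `f̂`. -/
theorem stmt3 {n : ℕ} (X : Set (Fin n → ℝ)) (hX : MeasurableSet X)
    (hXfin : volume X < ⊤) (hXpos : 0 < volume X)
    (f fhat : (Fin n → ℝ) → ℝ) (hf : Measurable f) (hfhat : Measurable fhat)
    (M : ℝ) (hM : 0 ≤ M) (hfM : ∀ x ∈ X, 0 ≤ f x ∧ f x ≤ M)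
    (p beta lam eps : ℝ) (hp : 1 ≤ p) (hbeta : 0 ≤ beta) (hlam : 0 ≤ lam)
    (heps : eps ∈ Set.Icc (0 : ℝ) 1)
    (hint : IntegrableOn (fun x => |fhat x - beta| ^ p) X volume)
    (hPAC : ENNReal.ofReal ((1 - eps) * (volume X).toReal)
      ≤ volume {x ∈ X | |fhat x - f x| ≤ lam}) :
    (∫ x in X, |f x - beta| ^ p) ^ (1 / p)
      ≤ ((lam * ((1 - eps) * (volume X).toReal) ^ (1 / p)
            + (∫ x in X, |fhat x - beta| ^ p) ^ (1 / p)) ^ p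
          + eps * (volume X).toReal * max (|M - beta| ^ p) (beta ^ p)) ^ (1 / p) := by
  obtain ⟨heps0, heps1⟩ := heps
  have hp0 : (0:ℝ) < p := lt_of_lt_of_le one_pos hp
  have hp0' : p ≠ 0 := hp0.ne'
  have hXr : (0:ℝ) ≤ (volume X).toReal := ENNReal.toReal_nonneg
  -- real constants
  set mr : ℝ := (1 - eps) * (volume X).toReal with hmr_def
  have hmr0 : 0 ≤ mr := mul_nonneg (by linarith) hXr
  set Cr : ℝ := max (|M - beta| ^ p) (beta ^ p) with hCr_def
  have hCr0 : 0 ≤ Cr := le_max_of_le_right (Real.rpow_nonneg hbeta p)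
  -- the good set
  set G : Set (Fin n → ℝ) := {x ∈ X | |fhat x - f x| ≤ lam} with hG_def
  have hGmeas : MeasurableSet G := by
    have : MeasurableSet {x | |fhat x - f x| ≤ lam} :=
      measurableSet_le ((hfhat.sub hf).abs) measurable_const
    exact hX.inter this
  have hGX : G ⊆ X := fun x hx => hx.1
  have hGfin : volume G < ⊤ := lt_of_le_of_lt (measure_mono hGX) hXfin
  -- the ENNReal mass m
  set m : ENNReal := ENNReal.ofReal mr with hm_def
  have hm_le : m ≤ volume G := hPAC
  have hm_fin : m ≠ ⊤ := ENNReal.ofReal_ne_top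
  -- weight density
  set c : ENNReal := m / volume G with hc_def
  have hc1 : c ≤ 1 := by
    rcases eq_or_ne (volume G) 0 with h0 | h0
    · have hm0 : m = 0 := le_antisymm (h0 ▸ hm_le) zero_le
      simp [hc_def, hm0]
    · exact (ENNReal.div_le_iff h0 hGfin.ne).mpr (by simpa using hm_le)
  set w : (Fin n → ℝ) → ENNReal := G.indicator (fun _ => c) with hw_def
  have hw_meas : Measurable w := measurable_const.indicator hGmeas
  have hw_le_one : ∀ x, w x ≤ 1 := by
    intro x
    by_cases hx : x ∈ G <;> simp [hw_def, hx, hc1]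
  have hw_int : ∫⁻ x in X, w x = m := by
    rw [hw_def, lintegral_indicator hGmeas, setLIntegral_const,
      Measure.restrict_apply hGmeas, Set.inter_eq_self_of_subset_left hGX]
    rcases eq_or_ne (volume G) 0 with h0 | h0
    · have hm0 : m = 0 := le_antisymm (h0 ▸ hm_le) zero_le
      simp [h0, hm0]
    · rw [hc_def, ENNReal.div_mul_cancel h0 hGfin.ne]
  -- the functions
  set h : (Fin n → ℝ) → ENNReal := fun x => (ENNReal.ofReal |f x - beta|) ^ p with hh_def
  set g : (Fin n → ℝ) → ENNReal := fun x => ENNReal.ofReal |fhat x - beta| with hg_def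
  have hh_meas : Measurable h := ((hf.sub_const beta).abs.ennreal_ofReal).pow measurable_const
  have hg_meas : Measurable g := (hfhat.sub_const beta).abs.ennreal_ofReal
  -- the weighted measure
  set ν : Measure (Fin n → ℝ) := (volume.restrict X).withDensity w with hν_def
  have hν_univ : ν Set.univ = m := by
    rw [hν_def, withDensity_apply _ MeasurableSet.univ, Measure.restrict_univ, hw_int]
  have hν_G_compl : ν Gᶜ = 0 := by
    rw [hν_def, withDensity_apply _ hGmeas.compl]
    have : ∀ x ∈ Gᶜ, w x = (0:ENNReal) := fun x hx => Set.indicator_of_notMem hx _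
    refine le_antisymm ?_ zero_le
    calc ∫⁻ x in Gᶜ, w x ∂(volume.restrict X)
        ≤ ∫⁻ _ in Gᶜ, (0:ENNReal) ∂(volume.restrict X) :=
          setLIntegral_mono' hGmeas.compl fun x hx => le_of_eq (this x hx)
      _ = 0 := by simp
  -- Step 1: Bound on the weighted (good) part, via Minkowski
  have good_bound : ∫⁻ x, h x ∂ν ≤
      (ENNReal.ofReal lam * m ^ (1/p) + (∫⁻ x in X, g x ^ p) ^ (1/p)) ^ p := by
    have hptwise : ∀ᵐ x ∂ν, h x ≤ (ENNReal.ofReal lam + g x) ^ p := by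
      have hsub : {x | ¬ h x ≤ (ENNReal.ofReal lam + g x) ^ p} ⊆ Gᶜ := by
        intro x hx
        simp only [Set.mem_setOf_eq] at hx
        intro hxG
        apply hx
        have hle : |f x - beta| ≤ lam + |fhat x - beta| := by
          have h1 : |fhat x - f x| ≤ lam := hxG.2
          calc |f x - beta| = |(f x - fhat x) + (fhat x - beta)| := by ring_nf
            _ ≤ |f x - fhat x| + |fhat x - beta| := abs_add_le _ _
            _ ≤ lam + |fhat x - beta| := by
                rw [abs_sub_comm]; exact add_le_add_left h1 _
        have : ENNReal.ofReal |f x - beta| ≤ ENNReal.ofReal lam + ENNReal.ofReal |fhat x - beta| := by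
          rw [← ENNReal.ofReal_add hlam (abs_nonneg _)]
          exact ENNReal.ofReal_le_ofReal hle
        exact ENNReal.rpow_le_rpow this hp0.le
      exact measure_mono_null hsub hν_G_compl
    have mink := ENNReal.lintegral_Lp_add_le (μ := ν)
      (f := fun _ => ENNReal.ofReal lam) (g := g) aemeasurable_const
      hg_meas.aemeasurable hp
    simp only [Pi.add_apply] at mink
    calc ∫⁻ x, h x ∂ν ≤ ∫⁻ x, (ENNReal.ofReal lam + g x) ^ p ∂ν :=
          lintegral_mono_ae hptwise
      _ = ((∫⁻ x, (ENNReal.ofReal lam + g x) ^ p ∂ν) ^ (1/p)) ^ p := by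
          rw [← ENNReal.rpow_mul, one_div, inv_mul_cancel₀ hp0', ENNReal.rpow_one]
      _ ≤ ((∫⁻ _, (ENNReal.ofReal lam) ^ p ∂ν) ^ (1/p)
            + (∫⁻ x, g x ^ p ∂ν) ^ (1/p)) ^ p :=
          ENNReal.rpow_le_rpow mink hp0.le
      _ ≤ (ENNReal.ofReal lam * m ^ (1/p) + (∫⁻ x in X, g x ^ p) ^ (1/p)) ^ p := by
          refine ENNReal.rpow_le_rpow (add_le_add ?_ ?_) hp0.le
          · rw [lintegral_const, hν_univ, ENNReal.mul_rpow_of_nonneg _ _ (by positivity),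
              ← ENNReal.rpow_mul, mul_one_div, div_self hp0', ENNReal.rpow_one]
          · refine ENNReal.rpow_le_rpow ?_ (by positivity)
            rw [hν_def, lintegral_withDensity_eq_lintegral_mul _ hw_meas
              (hg_meas.pow measurable_const)]
            refine lintegral_mono fun x => ?_
            simpa using mul_le_of_le_one_left zero_le (hw_le_one x)
  -- Step 2: bound on the bad part
  have bad_bound : ∫⁻ x in X, (1 - w x) * h x ≤ ENNReal.ofReal (eps * (volume X).toReal)
      * ENNReal.ofReal Cr := by
    have hCe : ∀ x ∈ X, h x ≤ ENNReal.ofReal Cr := by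
      intro x hx
      obtain ⟨hf0, hfMx⟩ := hfM x hx
      have habs : |f x - beta| ≤ max (|M - beta|) beta := by
        rw [abs_sub_le_iff]
        constructor
        · calc f x - beta ≤ M - beta := by linarith
            _ ≤ |M - beta| := le_abs_self _
            _ ≤ max (|M - beta|) beta := le_max_left _ _
        · calc beta - f x ≤ beta := by linarith
            _ ≤ max (|M - beta|) beta := le_max_right _ _
      have : |f x - beta| ^ p ≤ Cr := by
        calc |f x - beta| ^ p ≤ (max (|M - beta|) beta) ^ p :=
              Real.rpow_le_rpow (abs_nonneg _) habs hp0.le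
          _ = Cr := by
              rcases le_total (|M - beta|) beta with hle | hle
              · rw [max_eq_right hle, hCr_def,
                  max_eq_right (Real.rpow_le_rpow (abs_nonneg _) hle hp0.le)]
              · rw [max_eq_left hle, hCr_def,
                  max_eq_left (Real.rpow_le_rpow hbeta hle hp0.le)]
      calc h x = ENNReal.ofReal (|f x - beta| ^ p) := by
            simp only [hh_def]
            rw [ENNReal.ofReal_rpow_of_nonneg (abs_nonneg _) hp0.le]
        _ ≤ ENNReal.ofReal Cr := ENNReal.ofReal_le_ofReal this
    calc ∫⁻ x in X, (1 - w x) * h x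
        ≤ ∫⁻ x in X, (1 - w x) * ENNReal.ofReal Cr := by
          refine setLIntegral_mono' hX fun x hx => ?_
          exact mul_le_mul_right (hCe x hx) _
      _ = ENNReal.ofReal Cr * ∫⁻ x in X, (1 - w x) := by
          rw [← lintegral_const_mul _ (show Measurable fun x => (1:ENNReal) - w x from measurable_const.sub hw_meas)]
          simp_rw [mul_comm]
      _ = ENNReal.ofReal Cr * ENNReal.ofReal (eps * (volume X).toReal) := by
          congr 1
          have hsub' : ∫⁻ x in X, (1 - w x) ∂volume = (∫⁻ _ in X, 1 ∂volume) - ∫⁻ x in X, w x := by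
            refine lintegral_sub hw_meas ?_ (Filter.Eventually.of_forall hw_le_one)
            rw [hw_int]; exact hm_fin
          rw [hsub', hw_int, setLIntegral_one]
          calc volume X - m
              = ENNReal.ofReal ((volume X).toReal) - ENNReal.ofReal mr := by
                rw [ENNReal.ofReal_toReal hXfin.ne, hm_def]
            _ = ENNReal.ofReal ((volume X).toReal - mr) := by
                rw [ENNReal.ofReal_sub _ hmr0]
            _ = ENNReal.ofReal (eps * (volume X).toReal) := by
                congr 1; rw [hmr_def]; ring
      _ = ENNReal.ofReal (eps * (volume X).toReal) * ENNReal.ofReal Cr := mul_comm _ _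
  -- Step 3: splitting
  have hν_lint : ∫⁻ x, h x ∂ν = ∫⁻ x in X, w x * h x := by
    rw [hν_def, lintegral_withDensity_eq_lintegral_mul _ hw_meas hh_meas]
    simp only [Pi.mul_apply]
  have split : ∫⁻ x in X, h x = (∫⁻ x, h x ∂ν) + ∫⁻ x in X, (1 - w x) * h x := by
    rw [hν_lint]
    calc ∫⁻ x in X, h x = ∫⁻ x in X, (w x * h x + (1 - w x) * h x) := by
          refine lintegral_congr fun x => ?_
          have h1 : w x + (1 - w x) = 1 := add_tsub_cancel_of_le (hw_le_one x)
          calc h x = (w x + (1 - w x)) * h x := by rw [h1, one_mul]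
            _ = w x * h x + (1 - w x) * h x := add_mul _ _ _
      _ = (∫⁻ x in X, w x * h x) + ∫⁻ x in X, (1 - w x) * h x :=
          lintegral_add_left (hw_meas.mul hh_meas) _
  -- Combine in ENNReal
  have main : ∫⁻ x in X, h x ≤
      (ENNReal.ofReal lam * m ^ (1/p) + (∫⁻ x in X, g x ^ p) ^ (1/p)) ^ p
        + ENNReal.ofReal (eps * (volume X).toReal) * ENNReal.ofReal Cr := by
    rw [split]; exact add_le_add good_bound bad_bound
  -- Convert lintegrals to integrals
  have hInt_fhat : ∫⁻ x in X, g x ^ p = ENNReal.ofReal (∫ x in X, |fhat x - beta| ^ p) := by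
    refine Eq.trans (lintegral_congr fun x => ?_)
      (ofReal_integral_eq_lintegral_ofReal hint
        (Filter.Eventually.of_forall fun x => Real.rpow_nonneg (abs_nonneg _) p)).symm
    simp only [hg_def]
    rw [ENNReal.ofReal_rpow_of_nonneg (abs_nonneg _) hp0.le]
  have hInt_f : ∫ x in X, |f x - beta| ^ p = (∫⁻ x in X, h x).toReal := by
    rw [integral_eq_lintegral_of_nonneg_ae
      (Filter.Eventually.of_forall fun x => Real.rpow_nonneg (abs_nonneg _) p)
      (((hf.sub_const beta).abs.pow measurable_const).aestronglyMeasurable)]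
    congr 1
    refine lintegral_congr fun x => ?_
    simp only [hh_def]
    rw [ENNReal.ofReal_rpow_of_nonneg (abs_nonneg _) hp0.le]
  -- nonnegativity of the fhat integral
  have hIp0 : 0 ≤ ∫ x in X, |fhat x - beta| ^ p :=
    integral_nonneg fun x => Real.rpow_nonneg (abs_nonneg _) p
  -- RHS of main is finite and equals the real RHS
  set RHSe : ENNReal := (ENNReal.ofReal lam * m ^ (1/p) + (∫⁻ x in X, g x ^ p) ^ (1/p)) ^ p
        + ENNReal.ofReal (eps * (volume X).toReal) * ENNReal.ofReal Cr with hRHSe_def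
  have hsum_eq : ENNReal.ofReal lam * m ^ (1/p) + (∫⁻ x in X, g x ^ p) ^ (1/p)
      = ENNReal.ofReal (lam * mr ^ (1/p) + (∫ x in X, |fhat x - beta| ^ p) ^ (1/p)) := by
    rw [hInt_fhat, hm_def, ENNReal.ofReal_rpow_of_nonneg hmr0 (by positivity),
      ENNReal.ofReal_rpow_of_nonneg hIp0 (by positivity),
      ← ENNReal.ofReal_mul hlam, ← ENNReal.ofReal_add (by positivity) (by positivity)]
  have hRHS_eq : RHSe = ENNReal.ofReal
      ((lam * mr ^ (1/p) + (∫ x in X, |fhat x - beta| ^ p) ^ (1/p)) ^ p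
        + eps * (volume X).toReal * Cr) := by
    rw [hRHSe_def, hsum_eq, ENNReal.ofReal_rpow_of_nonneg (by positivity) hp0.le,
      ← ENNReal.ofReal_mul (by positivity),
      ← ENNReal.ofReal_add (by positivity) (by positivity)]
  -- conclude in reals
  have hreal : ∫ x in X, |f x - beta| ^ p ≤
      (lam * mr ^ (1/p) + (∫ x in X, |fhat x - beta| ^ p) ^ (1/p)) ^ p
        + eps * (volume X).toReal * Cr := by
    rw [hInt_f]
    have h1 : (∫⁻ x in X, h x).toReal ≤ RHSe.toReal := by
      refine ENNReal.toReal_mono ?_ main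
      rw [hRHS_eq]; exact ENNReal.ofReal_ne_top
    refine h1.trans ?_
    rw [hRHS_eq]
    exact le_of_eq (ENNReal.toReal_ofReal (by positivity))
  calc (∫ x in X, |f x - beta| ^ p) ^ (1/p)
      ≤ ((lam * mr ^ (1/p) + (∫ x in X, |fhat x - beta| ^ p) ^ (1/p)) ^ p
        + eps * (volume X).toReal * Cr) ^ (1/p) := by
        refine Real.rpow_le_rpow ?_ hreal (by positivity)
        exact integral_nonneg fun x => Real.rpow_nonneg (abs_nonneg _) p
    _ = _ := by rw [hmr_def, hCr_def]
end

section
/- Let X ⊆ ℝⁿ be a Lebesgue-measurable set of finite positive Lebesgue measure |X|. Let f, f̂ : ℝⁿ → ℝ be measurable, let M ≥ 0 satisfy 0 ≤ f(x) ≤ M for all x ∈ X, let f̂ be such that |f̂ − β|^p is integrable on X, let λ ≥ 0, ε ∈ [0,1], p ≥ 1, β ≥ 0, and ζ > 0. Assume that the Lebesgue measure of {x ∈ X : |f̂(x) − f(x)| ≤ λ} is at least (1 − ε)·|X|. If ( ( λ·((1 − ε)·|X|)^{1/p} + (∫_X |f̂(x) − β|^p dx)^{1/p} )^p + ε·|X|·max(|M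 − β|^p, β^p) )^{1/p} < ζ, then (∫_X |f(x) − β|^p dx)^{1/p} < ζ, i.e. f is near β within the safety level ζ on X with respect to the L^p norm. -/
open MeasureTheory

/-- Lemma 3 of the paper: if the upper-bound expression computed from the PAC
approximation `f̂` (with margin `λ` and error rate `ε` w.r.t. the uniform distribution
on `X`) is below the safety level `ζ`, then `f` is near `β` within `ζ` on `X` with
respect to the `L^p` norm. -/
theorem stmt4 {n : ℕ} (X : Set (Fin n → ℝ)) (hX : MeasurableSet X)
    (hXfin : volume X < ⊤) (hXpos : 0 < volume X)
    (f fhat : (Fin n → ℝ) → ℝ) (hf : Measurable f) (hfhat : Measurable fhat)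
    (M : ℝ) (hM : 0 ≤ M) (hfM : ∀ x ∈ X, 0 ≤ f x ∧ f x ≤ M)
    (p beta lam eps zeta : ℝ) (hp : 1 ≤ p) (hbeta : 0 ≤ beta) (hlam : 0 ≤ lam)
    (heps : eps ∈ Set.Icc (0 : ℝ) 1) (hzeta : 0 < zeta)
    (hint : IntegrableOn (fun x => |fhat x - beta| ^ p) X volume)
    (hPAC : ENNReal.ofReal ((1 - eps) * (volume X).toReal)
      ≤ volume {x ∈ X | |fhat x - f x| ≤ lam})
    (hUB : ((lam * ((1 - eps) * (volume X).toReal) ^ (1 / p)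
            + (∫ x in X, |fhat x - beta| ^ p) ^ (1 / p)) ^ p
          + eps * (volume X).toReal * max (|M - beta| ^ p) (beta ^ p)) ^ (1 / p) < zeta) :
    (∫ x in X, |f x - beta| ^ p) ^ (1 / p) < zeta := by
  obtain ⟨heps0, heps1⟩ := heps
  have hp0 : (0:ℝ) < p := lt_of_lt_of_le zero_lt_one hp
  have hip : (0:ℝ) ≤ 1 / p := by positivity
  set T : ℝ := (volume X).toReal with hTdef
  have hT0 : (0:ℝ) ≤ T := ENNReal.toReal_nonneg
  set G : Set (Fin n → ℝ) := {x ∈ X | |fhat x - f x| ≤ lam} with hGdef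
  have hGX : G ⊆ X := fun x hx => hx.1
  have hGm : MeasurableSet G := by
    have hEq : G = X ∩ {x | |fhat x - f x| ≤ lam} := rfl
    rw [hEq]
    exact hX.inter (measurableSet_le ((hfhat.sub hf).abs) measurable_const)
  have hGfin : volume G ≠ ⊤ := ((measure_mono hGX).trans_lt hXfin).ne
  set s : ℝ := (volume G).toReal with hsdef
  have hs0 : (0:ℝ) ≤ s := ENNReal.toReal_nonneg
  have hvolG : volume G = ENNReal.ofReal s := (ENNReal.ofReal_toReal hGfin).symm
  have hvolX : volume X = ENNReal.ofReal T := (ENNReal.ofReal_toReal hXfin.ne).symm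
  set a0 : ℝ := (1 - eps) * T with ha0def
  have ha00 : (0:ℝ) ≤ a0 := mul_nonneg (by linarith) hT0
  have ha0s : a0 ≤ s := by
    have h2 : ENNReal.ofReal a0 ≤ ENNReal.ofReal s := by rwa [← hvolG]
    exact (ENNReal.ofReal_le_ofReal_iff hs0).mp h2
  have hsT : s ≤ T := ENNReal.toReal_mono hXfin.ne (measure_mono hGX)
  set C : ℝ := max (|M - beta| ^ p) (beta ^ p) with hCdef
  have hC0 : (0:ℝ) ≤ C := le_trans (Real.rpow_nonneg (abs_nonneg _) p) (le_max_left _ _)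
  have hFC : ∀ x ∈ X, |f x - beta| ^ p ≤ C := by
    intro x hx
    obtain ⟨h0, hMx⟩ := hfM x hx
    rcases le_total beta (f x) with h | h
    · have hle : |f x - beta| ≤ |M - beta| := by
        rw [abs_of_nonneg (by linarith), abs_of_nonneg (by linarith)]
        linarith
      exact le_trans (Real.rpow_le_rpow (abs_nonneg _) hle hp0.le) (le_max_left _ _)
    · have hle : |f x - beta| ≤ beta := by
        rw [abs_of_nonpos (by linarith)]; linarith
      exact le_trans (Real.rpow_le_rpow (abs_nonneg _) hle hp0.le) (le_max_right _ _)
  obtain ⟨m, hm0, hm1, hms⟩ : ∃ m : ℝ, 0 ≤ m ∧ m ≤ 1 ∧ m * s = a0 := by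
    rcases eq_or_ne s 0 with h | h
    · refine ⟨1, zero_le_one, le_refl _, ?_⟩
      have ha : a0 = 0 := le_antisymm (h ▸ ha0s) ha00
      simp [h, ha]
    · refine ⟨a0 / s, by positivity, div_le_one_of_le₀ ha0s hs0, ?_⟩
      field_simp
  have hm1p0 : (0:ℝ) ≤ m ^ (1/p) := Real.rpow_nonneg hm0 _
  have h1m0 : (0:ℝ) ≤ (1 - m) * C := mul_nonneg (by linarith) hC0
  have hmlam : (0:ℝ) ≤ m ^ (1/p) * lam := mul_nonneg hm1p0 hlam
  set J : ℝ := ∫ x in X, |fhat x - beta| ^ p with hJdef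
  have hJ0 : (0:ℝ) ≤ J := integral_nonneg fun x => Real.rpow_nonneg (abs_nonneg _) p
  -- ENNReal-valued versions
  set F : (Fin n → ℝ) → ENNReal := fun x => ENNReal.ofReal |f x - beta| with hFdef
  set Fh : (Fin n → ℝ) → ENNReal := fun x => ENNReal.ofReal |fhat x - beta| with hFhdef
  have hFhm : Measurable Fh := ((hfhat.sub measurable_const).abs).ennreal_ofReal
  have hmeasf : Measurable fun x => |f x - beta| ^ p := by
    have h1 : Measurable fun x => |f x - beta| := (hf.sub measurable_const).abs
    fun_prop
  have hintf : IntegrableOn (fun x => |f x - beta| ^ p) X volume := by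
    apply Integrable.mono' ((integrableOn_const_iff (C := C)).mpr (Or.inr hXfin)) hmeasf.aestronglyMeasurable
    filter_upwards [ae_restrict_mem hX] with x hx
    rw [Real.norm_eq_abs, abs_of_nonneg (Real.rpow_nonneg (abs_nonneg _) p)]
    exact hFC x hx
  have hofF : ENNReal.ofReal (∫ x in X, |f x - beta| ^ p) = ∫⁻ x in X, (F x) ^ p := by
    rw [ofReal_integral_eq_lintegral_ofReal hintf
      (ae_of_all _ fun x => Real.rpow_nonneg (abs_nonneg _) p)]
    exact lintegral_congr fun x =>
      (ENNReal.ofReal_rpow_of_nonneg (abs_nonneg _) hp0.le).symm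
  have hofJ : ENNReal.ofReal J = ∫⁻ x in X, (Fh x) ^ p := by
    rw [hJdef, ofReal_integral_eq_lintegral_ofReal hint
      (ae_of_all _ fun x => Real.rpow_nonneg (abs_nonneg _) p)]
    exact lintegral_congr fun x =>
      (ENNReal.ofReal_rpow_of_nonneg (abs_nonneg _) hp0.le).symm
  set c : ENNReal := ENNReal.ofReal (m ^ (1/p) * lam) with hcdef
  -- pointwise bound on the good set
  have hptG : ∀ x ∈ G, (F x) ^ p ≤ (c + Fh x) ^ p + ENNReal.ofReal ((1 - m) * C) := by
    intro x hx
    obtain ⟨hxX, hxl⟩ := hx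
    have ha : (0:ℝ) ≤ |fhat x - beta| := abs_nonneg _
    have h1 : |f x - beta| ≤ lam + |fhat x - beta| := by
      have h2 : |f x - fhat x| ≤ lam := by rwa [abs_sub_comm]
      have h3 := abs_sub (f x) beta
      have h4 : |f x - beta| ≤ |f x - fhat x| + |fhat x - beta| := abs_sub_le _ _ _
      linarith
    have hmle : m ^ (1/p) ≤ 1 := Real.rpow_le_one hm0 hm1 hip
    have hm1p : (0:ℝ) ≤ m ^ (1/p) := hm1p0
    have hreal : |f x - beta| ^ p ≤ (m ^ (1/p) * lam + |fhat x - beta|) ^ p + (1 - m) * C := by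
      have hv : |f x - beta| ^ p ≤ (lam + |fhat x - beta|) ^ p :=
        Real.rpow_le_rpow (abs_nonneg _) h1 hp0.le
      have hCx : |f x - beta| ^ p ≤ C := hFC x hxX
      have hmv : m * (lam + |fhat x - beta|) ^ p ≤ (m ^ (1/p) * lam + |fhat x - beta|) ^ p := by
        have e1 : m * (lam + |fhat x - beta|) ^ p
            = (m ^ (1/p) * (lam + |fhat x - beta|)) ^ p := by
          rw [Real.mul_rpow hm1p (by positivity), ← Real.rpow_mul hm0,
            one_div_mul_cancel hp0.ne', Real.rpow_one]
        rw [e1]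
        apply Real.rpow_le_rpow (mul_nonneg hm1p (by positivity)) _ hp0.le
        have h5 : m ^ (1/p) * |fhat x - beta| ≤ |fhat x - beta| :=
          mul_le_of_le_one_left ha hmle
        have h6 : m ^ (1/p) * (lam + |fhat x - beta|)
            = m ^ (1/p) * lam + m ^ (1/p) * |fhat x - beta| := by ring
        rw [h6]
        linarith
      have h7 : (0:ℝ) ≤ 1 - m := by linarith
      nlinarith [mul_le_mul_of_nonneg_left hv hm0, mul_le_mul_of_nonneg_left hCx h7]
    calc (F x) ^ p = ENNReal.ofReal (|f x - beta| ^ p) :=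
          ENNReal.ofReal_rpow_of_nonneg (abs_nonneg _) hp0.le
      _ ≤ ENNReal.ofReal ((m ^ (1/p) * lam + |fhat x - beta|) ^ p + (1 - m) * C) :=
          ENNReal.ofReal_le_ofReal hreal
      _ = (c + Fh x) ^ p + ENNReal.ofReal ((1 - m) * C) := by
          have e2 : ENNReal.ofReal (m ^ (1/p) * lam + |fhat x - beta|) = c + Fh x :=
            ENNReal.ofReal_add hmlam ha
          have e3 : ENNReal.ofReal (m ^ (1/p) * lam + |fhat x - beta|) ^ p
              = ENNReal.ofReal ((m ^ (1/p) * lam + |fhat x - beta|) ^ p) :=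
            ENNReal.ofReal_rpow_of_nonneg (add_nonneg hmlam ha) hp0.le
          rw [ENNReal.ofReal_add (Real.rpow_nonneg (add_nonneg hmlam ha) p) h1m0, ← e3, e2]
  -- Minkowski on the good set
  have hA : (∫⁻ x in G, (c + Fh x) ^ p) ≤ ENNReal.ofReal ((lam * a0 ^ (1/p) + J ^ (1/p)) ^ p) := by
    have hmink := ENNReal.lintegral_Lp_add_le (μ := volume.restrict G)
      (f := fun _ => c) (g := Fh) aemeasurable_const hFhm.aemeasurable hp
    have hconst : (∫⁻ _ in G, c ^ p) ^ (1/p) = ENNReal.ofReal (lam * a0 ^ (1/p)) := by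
      rw [setLIntegral_const, ENNReal.mul_rpow_of_nonneg _ _ hip, ← ENNReal.rpow_mul,
        mul_one_div_cancel hp0.ne', ENNReal.rpow_one, hvolG,
        ENNReal.ofReal_rpow_of_nonneg hs0 hip, hcdef, ← ENNReal.ofReal_mul (by positivity)]
      congr 1
      rw [mul_assoc, mul_comm (lam) _, ← mul_assoc, ← Real.mul_rpow hm0 hs0, hms, mul_comm]
    have hFhle : (∫⁻ x in G, Fh x ^ p) ^ (1/p) ≤ ENNReal.ofReal (J ^ (1/p)) := by
      have hsub : (∫⁻ x in G, Fh x ^ p) ≤ ∫⁻ x in X, Fh x ^ p :=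
        lintegral_mono' (Measure.restrict_mono hGX le_rfl) le_rfl
      calc (∫⁻ x in G, Fh x ^ p) ^ (1/p) ≤ (∫⁻ x in X, Fh x ^ p) ^ (1/p) :=
            ENNReal.rpow_le_rpow hsub hip
        _ = ENNReal.ofReal (J ^ (1/p)) := by
            rw [← hofJ, ENNReal.ofReal_rpow_of_nonneg hJ0 hip]
    have h1p : (∫⁻ x in G, (c + Fh x) ^ p) ^ (1/p)
        ≤ ENNReal.ofReal (lam * a0 ^ (1/p) + J ^ (1/p)) := by
      rw [ENNReal.ofReal_add (mul_nonneg hlam (Real.rpow_nonneg ha00 _)) (Real.rpow_nonneg hJ0 _)]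
      simp only [Pi.add_apply] at hmink
      calc (∫⁻ x in G, (c + Fh x) ^ p) ^ (1/p)
          ≤ (∫⁻ _ in G, c ^ p) ^ (1/p) + (∫⁻ x in G, Fh x ^ p) ^ (1/p) := hmink
        _ ≤ _ := by rw [hconst]; exact add_le_add le_rfl hFhle
    calc (∫⁻ x in G, (c + Fh x) ^ p)
        = ((∫⁻ x in G, (c + Fh x) ^ p) ^ (1/p)) ^ p := by
          rw [← ENNReal.rpow_mul, one_div_mul_cancel hp0.ne', ENNReal.rpow_one]
      _ ≤ (ENNReal.ofReal (lam * a0 ^ (1/p) + J ^ (1/p))) ^ p :=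
          ENNReal.rpow_le_rpow h1p hp0.le
      _ = ENNReal.ofReal ((lam * a0 ^ (1/p) + J ^ (1/p)) ^ p) :=
          ENNReal.ofReal_rpow_of_nonneg
            (add_nonneg (mul_nonneg hlam (Real.rpow_nonneg ha00 _)) (Real.rpow_nonneg hJ0 _))
            hp0.le
  -- good-set bound
  have hGbound : (∫⁻ x in G, F x ^ p)
      ≤ ENNReal.ofReal ((lam * a0 ^ (1/p) + J ^ (1/p)) ^ p) + ENNReal.ofReal ((1 - m) * C * s) := by
    calc (∫⁻ x in G, F x ^ p)
        ≤ ∫⁻ x in G, ((c + Fh x) ^ p + ENNReal.ofReal ((1 - m) * C)) := by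
          refine setLIntegral_mono (by fun_prop) hptG
      _ = (∫⁻ x in G, (c + Fh x) ^ p) + ENNReal.ofReal ((1 - m) * C) * volume G := by
          rw [lintegral_add_right _ measurable_const, setLIntegral_const]
      _ ≤ ENNReal.ofReal ((lam * a0 ^ (1/p) + J ^ (1/p)) ^ p) + ENNReal.ofReal ((1 - m) * C * s) := by
          apply add_le_add hA
          rw [hvolG, ← ENNReal.ofReal_mul h1m0]
  -- bad-set bound
  have hBbound : (∫⁻ x in X \ G, F x ^ p) ≤ ENNReal.ofReal (C * (T - s)) := by
    have hvol : volume (X \ G) = ENNReal.ofReal (T - s) := by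
      rw [measure_diff hGX hGm.nullMeasurableSet hGfin, hvolX, hvolG,
        ← ENNReal.ofReal_sub _ hs0]
    calc (∫⁻ x in X \ G, F x ^ p) ≤ ∫⁻ _ in X \ G, ENNReal.ofReal C := by
          refine setLIntegral_mono measurable_const fun x hx => ?_
          calc F x ^ p = ENNReal.ofReal (|f x - beta| ^ p) :=
                ENNReal.ofReal_rpow_of_nonneg (abs_nonneg _) hp0.le
            _ ≤ ENNReal.ofReal C := ENNReal.ofReal_le_ofReal (hFC x hx.1)
      _ = ENNReal.ofReal C * volume (X \ G) := setLIntegral_const _ _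
      _ = ENNReal.ofReal (C * (T - s)) := by
          rw [hvol, ← ENNReal.ofReal_mul hC0]
  -- assemble
  have hsplit : (∫⁻ x in X, F x ^ p) = (∫⁻ x in G, F x ^ p) + ∫⁻ x in X \ G, F x ^ p := by
    rw [← lintegral_union (hX.diff hGm) Set.disjoint_sdiff_right, Set.union_diff_cancel hGX]
  have hfinal : ENNReal.ofReal (∫ x in X, |f x - beta| ^ p)
      ≤ ENNReal.ofReal ((lam * a0 ^ (1/p) + J ^ (1/p)) ^ p + eps * T * C) := by
    rw [hofF, hsplit]
    refine le_trans (add_le_add hGbound hBbound) ?_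
    have hn1 : (0:ℝ) ≤ (1 - m) * C * s := mul_nonneg h1m0 hs0
    have hn2 : (0:ℝ) ≤ C * (T - s) := mul_nonneg hC0 (by linarith)
    have hn3 : (0:ℝ) ≤ (lam * a0 ^ (1/p) + J ^ (1/p)) ^ p :=
      Real.rpow_nonneg (add_nonneg (mul_nonneg hlam (Real.rpow_nonneg ha00 _))
        (Real.rpow_nonneg hJ0 _)) p
    rw [add_assoc, ← ENNReal.ofReal_add hn1 hn2, ← ENNReal.ofReal_add hn3 (add_nonneg hn1 hn2)]
    apply ENNReal.ofReal_le_ofReal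
    have hms2 : m * s = (1 - eps) * T := by rw [hms, ha0def]
    have key : (1 - m) * C * s + C * (T - s) = eps * T * C := by
      linear_combination (-C) * hms2
    rw [key]
  have hle : (∫ x in X, |f x - beta| ^ p) ≤ (lam * a0 ^ (1/p) + J ^ (1/p)) ^ p + eps * T * C :=
    (ENNReal.ofReal_le_ofReal_iff (add_nonneg
      (Real.rpow_nonneg (add_nonneg (mul_nonneg hlam (Real.rpow_nonneg ha00 _))
        (Real.rpow_nonneg hJ0 _)) p)
      (mul_nonneg (mul_nonneg heps0 hT0) hC0))).mp hfinal
  calc (∫ x in X, |f x - beta| ^ p) ^ (1/p)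
      ≤ ((lam * a0 ^ (1/p) + J ^ (1/p)) ^ p + eps * T * C) ^ (1/p) :=
        Real.rpow_le_rpow (integral_nonneg fun x => Real.rpow_nonneg (abs_nonneg _) p) hle hip
    _ < zeta := hUB
end

section
/- Let μ be a finite measure on a measurable space X, let f, f̂ : X → ℝ be measurable with f(x) ≥ 0 for all x ∈ X, and let f̂ be μ-integrable. Let λ ≥ 0, ε ∈ [0,1], ρ ∈ ℝ, and let C ≥ 0 be such that f̂(x) − λ ≤ C for all x ∈ X. Assume μ({x ∈ X : |f̂(x) − f(x)| > λ}) ≤ ε·μ(X). If ∫_X (f̂(x) − λ) dμ(x) − ε·μ(X)·C > ρ, then ∫_X f(x) dμ(x) > ρ. -/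
open MeasureTheory

/-- Lemma 4 of the paper: if `f̂` is a PAC approximation of the nonnegative reward
function `f` with margin `λ` and error rate `ε` w.r.t. the finite measure `μ`,
`C ≥ 0` bounds `f̂ - λ` from above, and
`∫ (f̂ - λ) dμ - ε · μ(X) · C > ρ`, then the expectation of `f` exceeds the reward
level `ρ` (stated in `EReal` since `f` need not be integrable). -/
theorem stmt5 {X : Type*} [MeasurableSpace X] (μ : Measure X) [IsFiniteMeasure μ]
    (f fhat : X → ℝ) (hf : Measurable f) (hfhat : Measurable fhat)
    (hf0 : ∀ x, 0 ≤ f x) (hint : Integrable fhat μ)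
    (lam eps rho C : ℝ) (hlam : 0 ≤ lam) (heps : eps ∈ Set.Icc (0 : ℝ) 1)
    (hC0 : 0 ≤ C) (hC : ∀ x, fhat x - lam ≤ C)
    (hPAC : μ {x | lam < |fhat x - f x|} ≤ ENNReal.ofReal eps * μ Set.univ)
    (hcond : rho < (∫ x, (fhat x - lam) ∂μ) - eps * (μ Set.univ).toReal * C) :
    (rho : EReal) < ((∫⁻ x, ENNReal.ofReal (f x) ∂μ) : EReal) := by
  set B : Set X := {x | lam < |fhat x - f x|} with hBdef
  have hB : MeasurableSet B := measurableSet_lt measurable_const ((hfhat.sub hf).abs)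
  set S : Set X := Bᶜ with hSdef
  have hS : MeasurableSet S := hB.compl
  set h : X → ℝ := fun x => fhat x - lam with hhdef
  have hinth : Integrable h μ := hint.sub (integrable_const lam)
  -- bound the integral over B
  have hμB : (μ B).toReal ≤ eps * (μ Set.univ).toReal := by
    have h1 : (μ B).toReal ≤ (ENNReal.ofReal eps * μ Set.univ).toReal := by
      apply ENNReal.toReal_mono _ hPAC
      exact ENNReal.mul_ne_top ENNReal.ofReal_ne_top (measure_ne_top μ _)
    simpa [ENNReal.toReal_mul, ENNReal.toReal_ofReal heps.1] using h1
  have hBint : ∫ x in B, h x ∂μ ≤ eps * (μ Set.univ).toReal * C := by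
    have h1 : ∫ x in B, h x ∂μ ≤ ∫ _x in B, C ∂μ := by
      apply setIntegral_mono_on hinth.integrableOn (integrableOn_const (measure_ne_top μ B)) hB
      intro x _
      exact hC x
    have h2 : ∫ _x in B, C ∂μ = (μ B).toReal * C := by simp [Measure.restrict_apply_univ, measureReal_def]
    calc ∫ x in B, h x ∂μ ≤ (μ B).toReal * C := by rw [← h2]; exact h1
      _ ≤ eps * (μ Set.univ).toReal * C := by
          exact mul_le_mul_of_nonneg_right hμB hC0
  have hsplit : ∫ x in S, h x ∂μ + ∫ x in B, h x ∂μ = ∫ x, h x ∂μ := by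
    have := integral_add_compl hB hinth
    rw [hSdef]
    linarith
  have hSkey : rho < ∫ x in S, h x ∂μ := by
    have : ∫ x in S, h x ∂μ = ∫ x, h x ∂μ - ∫ x in B, h x ∂μ := by linarith
    rw [this]
    have := hcond
    simp only [hhdef] at *
    linarith
  -- indicator function
  set g : X → ℝ := S.indicator h with hgdef
  have hgint : Integrable g μ := hinth.indicator hS
  have hgI : ∫ x, g x ∂μ = ∫ x in S, h x ∂μ := integral_indicator hS
  set g' : X → ℝ := fun x => max (g x) 0 with hg'def
  have hg'int : Integrable g' μ := hgint.pos_part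
  have hg'f : ∀ x, g' x ≤ f x := by
    intro x
    by_cases hx : x ∈ S
    · simp only [hg'def, hgdef, Set.indicator_of_mem hx, hhdef, max_le_iff]
      have : ¬ lam < |fhat x - f x| := hx
      have habs := abs_le.1 (not_lt.1 this)
      constructor
      · linarith [habs.2]
      · exact hf0 x
    · simp only [hg'def, hgdef, Set.indicator_of_notMem hx]
      simpa using hf0 x
  have hkey : ENNReal.ofReal (∫ x, g' x ∂μ) ≤ ∫⁻ x, ENNReal.ofReal (f x) ∂μ := by
    rw [ofReal_integral_eq_lintegral_ofReal hg'int
      (Filter.Eventually.of_forall fun x => le_max_right _ _)]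
    exact lintegral_mono fun x => ENNReal.ofReal_le_ofReal (hg'f x)
  have hrg : rho < ∫ x, g' x ∂μ := by
    have hmono : ∫ x, g x ∂μ ≤ ∫ x, g' x ∂μ :=
      integral_mono hgint hg'int fun x => le_max_left _ _
    rw [hgI] at hmono
    linarith
  calc (rho : EReal) < ((ENNReal.ofReal (∫ x, g' x ∂μ)) : EReal) := by
        rw [EReal.coe_ennreal_ofReal]
        exact_mod_cast lt_max_of_lt_left hrg
    _ ≤ ((∫⁻ x, ENNReal.ofReal (f x) ∂μ) : EReal) :=
        EReal.coe_ennreal_le_coe_ennreal_iff.2 hkey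
end

section
/- Let (Ω, 𝒜, P) be a probability space, let g : Ω → ℝ be a measurable function, let N ≥ 1 be a natural number, and let ε ∈ (0,1). Consider the N-fold product probability measure P^N on Ω^N. Then P^N ( { (ω₁, …, ω_N) ∈ Ω^N : P({ω ∈ Ω : g(ω) > max_{1 ≤ i ≤ N} g(ω_i)}) > ε } ) ≤ (1 − ε)^N. -/
open MeasureTheory

lemma scenario_aux {Ω : Type*} [MeasurableSpace Ω] (P : Measure Ω) [IsProbabilityMeasure P]
    (g : Ω → ℝ) (hg : Measurable g) (eps : ℝ) (heps : eps ∈ Set.Ioo (0 : ℝ) 1) :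
    ∃ A : Set Ω, MeasurableSet A ∧ P A ≤ ENNReal.ofReal (1 - eps) ∧
      {x | ENNReal.ofReal eps < P {y | g x < g y}} ⊆ A := by
  obtain ⟨h0, h1⟩ := heps
  set ε' : ENNReal := ENNReal.ofReal eps with hε'
  have hε'pos : 0 < ε' := ENNReal.ofReal_pos.mpr h0
  have hgoal : ENNReal.ofReal (1 - eps) = 1 - ε' := by
    rw [hε', ENNReal.ofReal_sub _ h0.le, ENNReal.ofReal_one]
  set S : Set ℝ := {l | ε' < P {y | l < g y}} with hSdef
  have hlower : ∀ a b : ℝ, a ≤ b → b ∈ S → a ∈ S := by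
    intro a b hab hb
    exact lt_of_lt_of_le hb (measure_mono fun y hy => lt_of_le_of_lt hab hy)
  rcases Set.eq_empty_or_nonempty S with hemp | hne
  · exact ⟨∅, MeasurableSet.empty, by simp,
      fun x hx => (Set.eq_empty_iff_forall_notMem.mp hemp (g x) hx).elim⟩
  · -- S is bounded above
    have htend : Filter.Tendsto (fun n : ℕ => P {y | (n : ℝ) < g y}) Filter.atTop (nhds 0) := by
      have hmeas : ∀ n : ℕ, NullMeasurableSet {y | (n : ℝ) < g y} P :=
        fun n => (hg measurableSet_Ioi).nullMeasurableSet
      have hanti : Antitone (fun n : ℕ => {y | (n : ℝ) < g y}) := by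
        intro n m hnm y hy
        simp only [Set.mem_setOf_eq] at hy ⊢
        exact lt_of_le_of_lt (by exact_mod_cast hnm) hy
      have hINT : (⋂ n : ℕ, {y | (n : ℝ) < g y}) = ∅ := by
        ext y
        simp only [Set.mem_iInter, Set.mem_setOf_eq, Set.mem_empty_iff_false, iff_false,
          not_forall, not_lt]
        obtain ⟨n, hn⟩ := exists_nat_ge (g y)
        exact ⟨n, hn⟩
      have := tendsto_measure_iInter_atTop (μ := P) hmeas hanti ⟨0, measure_ne_top P _⟩
      rw [hINT] at this
      simpa [Function.comp_def] using this
    obtain ⟨M, hM⟩ := (htend.eventually_lt_const hε'pos).exists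
    have hbdd : BddAbove S := by
      refine ⟨(M : ℝ), fun s hs => ?_⟩
      by_contra h
      push_neg at h
      exact absurd (hlower _ _ h.le hs) (fun hMm => absurd hMm (not_lt.mpr hM.le))
    set q : ℝ := sSup S with hq
    by_cases hqS : q ∈ S
    · refine ⟨{x | g x ≤ q}, hg measurableSet_Iic, ?_, fun x hx => le_csSup hbdd hx⟩
      have hc : P {x | g x ≤ q} = 1 - P {y | q < g y} := by
        have hcompl : {x | g x ≤ q} = {y | q < g y}ᶜ := by ext z; simp [not_lt]
        rw [hcompl, measure_compl (show MeasurableSet {y | q < g y} from hg measurableSet_Ioi) (measure_ne_top P _), measure_univ]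
      rw [hc, hgoal]
      exact tsub_le_tsub_left hqS.le 1
    · refine ⟨{x | g x < q}, hg measurableSet_Iio, ?_,
        fun x hx => lt_of_le_of_ne (le_csSup hbdd hx) (fun h => hqS (show sSup S ∈ S from h ▸ hx))⟩
      have hkey : ε' ≤ P {y | q ≤ g y} := by
        have hiter : {y | q ≤ g y} = ⋂ n : ℕ, {y | q - 1 / (n + 1) < g y} := by
          ext y
          simp only [Set.mem_setOf_eq, Set.mem_iInter]
          constructor
          · intro hy n
            have : (0 : ℝ) < 1 / (n + 1) := by positivity
            linarith
          · intro hall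
            by_contra h
            push_neg at h
            obtain ⟨n, hn⟩ := exists_nat_one_div_lt (show (0 : ℝ) < q - g y by linarith)
            have := hall n
            linarith
        have hmeas : ∀ n : ℕ, NullMeasurableSet {y | q - 1 / (n + 1) < g y} P :=
          fun n => (hg measurableSet_Ioi).nullMeasurableSet
        have hanti : Antitone (fun n : ℕ => {y | q - 1 / ((n : ℝ) + 1) < g y}) := by
          intro n m hnm y hy
          simp only [Set.mem_setOf_eq] at hy ⊢
          have h1 : (1 : ℝ) / (m + 1) ≤ 1 / (n + 1) := by
            apply one_div_le_one_div_of_le (by positivity)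
            exact_mod_cast Nat.add_le_add_right hnm 1
          linarith
        have htend2 := tendsto_measure_iInter_atTop (μ := P) hmeas hanti ⟨0, measure_ne_top P _⟩
        rw [hiter]
        refine ge_of_tendsto htend2 (Filter.Eventually.of_forall fun n => ?_)
        have hmem : (q - 1 / ((n : ℝ) + 1)) ∈ S := by
          have hlt : q - 1 / ((n : ℝ) + 1) < q := by
            have : (0 : ℝ) < 1 / ((n : ℝ) + 1) := by positivity
            linarith
          obtain ⟨s, hsS, hs⟩ := exists_lt_of_lt_csSup hne hlt
          exact hlower _ _ hs.le hsS
        exact hmem.le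
      have hc : P {x | g x < q} = 1 - P {y | q ≤ g y} := by
        have hcompl : {x | g x < q} = {y | q ≤ g y}ᶜ := by ext z; simp [not_le]
        rw [hcompl, measure_compl (show MeasurableSet {y | q ≤ g y} from hg measurableSet_Ici) (measure_ne_top P _), measure_univ]
      rw [hc, hgoal]
      exact tsub_le_tsub_left hkey 1

/-- One-dimensional instance of the scenario approach (Theorem 1 specialized to the
safe-region check of Lemma 1): drawing `N ≥ 1` i.i.d. samples according to `P`, the
probability over the sample that the exceedance set
`{ω | g ω > max_i g ωᵢ}` has `P`-measure greater than `ε` is at most `(1 - ε)^N`. -/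
theorem stmt7 {Ω : Type*} [MeasurableSpace Ω] (P : Measure Ω) [IsProbabilityMeasure P]
    (g : Ω → ℝ) (hg : Measurable g) (N : ℕ) (hN : 1 ≤ N)
    (eps : ℝ) (heps : eps ∈ Set.Ioo (0 : ℝ) 1) :
    Measure.pi (fun _ : Fin N => P)
        {ω : Fin N → Ω | ENNReal.ofReal eps < P {x | (⨆ i, g (ω i)) < g x}}
      ≤ ENNReal.ofReal ((1 - eps) ^ N) := by
  obtain ⟨A, hAm, hAle, hAsub⟩ := scenario_aux P g hg eps heps
  have hNE : Nonempty (Fin N) := Fin.pos_iff_nonempty.mp hN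
  have hsub : {ω : Fin N → Ω | ENNReal.ofReal eps < P {x | (⨆ i, g (ω i)) < g x}}
      ⊆ Set.pi Set.univ (fun _ : Fin N => A) := by
    intro ω hω i _
    apply hAsub
    refine lt_of_lt_of_le hω (measure_mono fun x hx => ?_)
    exact lt_of_le_of_lt (le_ciSup (Finite.bddAbove_range fun j => g (ω j)) i) hx
  calc Measure.pi (fun _ : Fin N => P)
        {ω : Fin N → Ω | ENNReal.ofReal eps < P {x | (⨆ i, g (ω i)) < g x}}
      ≤ Measure.pi (fun _ : Fin N => P) (Set.pi Set.univ fun _ => A) := measure_mono hsub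
    _ = ∏ _i : Fin N, P A := Measure.pi_pi _ _
    _ = (P A) ^ N := by simp [Finset.prod_const]
    _ ≤ (ENNReal.ofReal (1 - eps)) ^ N := pow_le_pow_left₀ zero_le hAle N
    _ = ENNReal.ofReal ((1 - eps) ^ N) := (ENNReal.ofReal_pow (by linarith [heps.2]) N).symm
end

section
/- Let (Ω, 𝒜, P) be a probability space, let g : Ω → ℝ be a measurable function, let ε ∈ (0,1) and η ∈ (0,1], and let N ≥ 1 be a natural number with N ≥ (2/ε)·(ln(1/η) + 1). Consider the N-fold product probability measure P^N on Ω^N. Then P^N ( { (ω₁, …, ω_N) ∈ Ω^N : P({ω ∈ Ω : g(ω) ≤ max_{1 ≤ i ≤ N} g(ω_i)}) ≥ 1 − ε } ) ≥ 1 − η. In particular, with confidence at least 1 − η over the sample, for any safety level ζ with max_{1 ≤ i ≤ N} g(ω_i) < ζ one has P({ω : g(ω) < ζ}) ≥ 1 − ε. -/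
open MeasureTheory
open scoped ENNReal

/-- Lemma 1 of the paper (statistical guarantee of the sampled safe-region check):
with `N ≥ (2/ε)·(ln(1/η) + 1)` i.i.d. samples drawn according to `P`, with probability
at least `1 - η` over the sample the set `{ω | g ω ≤ max_i g ωᵢ}` has `P`-measure at
least `1 - ε`; in particular, for any such sample and any safety level `ζ` with
`max_i g ωᵢ < ζ`, we have `P {ω | g ω < ζ} ≥ 1 - ε`. -/
theorem stmt9 {Ω : Type*} [MeasurableSpace Ω] (P : Measure Ω) [IsProbabilityMeasure P]
    (g : Ω → ℝ) (hg : Measurable g) (N : ℕ) (hN : 1 ≤ N)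
    (eps eta : ℝ) (heps : eps ∈ Set.Ioo (0 : ℝ) 1) (heta : eta ∈ Set.Ioc (0 : ℝ) 1)
    (hNbound : 2 / eps * (Real.log (1 / eta) + 1) ≤ (N : ℝ)) :
    1 - ENNReal.ofReal eta
        ≤ Measure.pi (fun _ : Fin N => P)
            {ω : Fin N → Ω | ENNReal.ofReal (1 - eps) ≤ P {x | g x ≤ ⨆ i, g (ω i)}}
      ∧ ∀ ω : Fin N → Ω,
          ENNReal.ofReal (1 - eps) ≤ P {x | g x ≤ ⨆ i, g (ω i)} →
          ∀ zeta : ℝ, (⨆ i, g (ω i)) < zeta →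
            ENNReal.ofReal (1 - eps) ≤ P {x | g x < zeta} := by
  obtain ⟨heps0, heps1⟩ := heps
  obtain ⟨heta0, heta1⟩ := heta
  have hNe : Nonempty (Fin N) := Fin.pos_iff_nonempty.mp hN
  set c : ℝ≥0∞ := ENNReal.ofReal (1 - eps) with hc
  have hc1 : c < 1 := by
    rw [hc, ← ENNReal.ofReal_one]
    exact (ENNReal.ofReal_lt_ofReal_iff one_pos).mpr (by linarith)
  set F : ℝ → ℝ≥0∞ := fun t => P {x | g x ≤ t} with hF
  have hFmono : Monotone F := fun s t hst => measure_mono (fun x hx => le_trans hx hst)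
  set S : Set ℝ := {t | c ≤ F t} with hS
  -- S nonempty
  have hSne : S.Nonempty := by
    have hU : (⋃ n : ℕ, {x | g x ≤ (n : ℝ)}) = Set.univ := by
      ext x
      simp only [Set.mem_iUnion, Set.mem_setOf_eq, Set.mem_univ, iff_true]
      exact exists_nat_ge (g x)
    have hm : Monotone (fun n : ℕ => {x | g x ≤ (n : ℝ)}) := fun m n hmn x hx => by
      simp only [Set.mem_setOf_eq] at hx ⊢
      exact le_trans hx (Nat.cast_le.mpr hmn)
    have h1 : (1 : ℝ≥0∞) = ⨆ n : ℕ, F (n : ℝ) := by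
      rw [hF]
      simpa [hU] using hm.measure_iUnion (μ := P)
    have : c < ⨆ n : ℕ, F (n : ℝ) := h1 ▸ hc1
    obtain ⟨n, hn⟩ := lt_iSup_iff.mp this
    exact ⟨n, hn.le⟩
  -- S bounded below
  have hSbdd : BddBelow S := by
    have hI : (⋂ n : ℕ, {x | g x ≤ -(n : ℝ)}) = ∅ := by
      ext x
      simp only [Set.mem_iInter, Set.mem_setOf_eq, Set.mem_empty_iff_false, iff_false, not_forall]
      obtain ⟨n, hn⟩ := exists_nat_gt (-(g x))
      exact ⟨n, by push_neg; linarith⟩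
    have ha : Antitone (fun n : ℕ => {x | g x ≤ -(n : ℝ)}) := fun m n hmn x hx => by
      simp only [Set.mem_setOf_eq] at hx ⊢
      exact le_trans hx (neg_le_neg (Nat.cast_le.mpr hmn))
    have h0 : (⨅ n : ℕ, F (-(n : ℝ))) = 0 := by
      rw [hF]
      rw [← ha.measure_iInter (fun n => (hg measurableSet_Iic).nullMeasurableSet)
        ⟨0, measure_ne_top P _⟩]
      simp [hI]
    have : (⨅ n : ℕ, F (-(n : ℝ))) < c := by
      rw [h0]; exact ENNReal.ofReal_pos.mpr (by linarith)
    obtain ⟨n, hn⟩ := iInf_lt_iff.mp this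
    refine ⟨-(n : ℝ), fun s hs => ?_⟩
    by_contra h
    push_neg at h
    exact absurd (le_trans hs (hFmono h.le)) (not_le.mpr hn)
  set t₀ : ℝ := sInf S with ht₀
  -- right continuity : c ≤ F t₀
  have hFt₀ : c ≤ F t₀ := by
    have hI : {x | g x ≤ t₀} = ⋂ n : ℕ, {x | g x ≤ t₀ + 1 / (n + 1)} := by
      ext x
      simp only [Set.mem_setOf_eq, Set.mem_iInter]
      constructor
      · intro h n
        have : (0:ℝ) < 1 / (n + 1) := by positivity
        linarith
      · intro h
        by_contra hlt
        push_neg at hlt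
        obtain ⟨n, hn⟩ := exists_nat_one_div_lt (show (0:ℝ) < g x - t₀ by linarith)
        have := h n
        linarith
    have ha : Antitone (fun n : ℕ => {x | g x ≤ t₀ + 1 / (n + 1)}) := by
      intro m n hmn x hx
      simp only [Set.mem_setOf_eq] at hx ⊢
      have : (1:ℝ) / (n + 1) ≤ 1 / (m + 1) := by
        apply one_div_le_one_div_of_le (by positivity)
        exact_mod_cast Nat.add_le_add_right hmn 1
      linarith
    have heq : F t₀ = ⨅ n : ℕ, F (t₀ + 1 / (n + 1)) := by
      rw [hF]
      simp only
      rw [hI]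
      exact ha.measure_iInter (fun n => (hg measurableSet_Iic).nullMeasurableSet)
        ⟨0, measure_ne_top P _⟩
    rw [heq]
    refine le_iInf fun n => ?_
    obtain ⟨s, hsS, hs⟩ := (csInf_lt_iff hSbdd hSne).mp
      (show sInf S < t₀ + 1 / (n + 1) by
        have : (0:ℝ) < 1 / (n + 1) := by positivity
        linarith)
    exact le_trans hsS (hFmono hs.le)
  -- left limit : P {g < t₀} ≤ c
  have hFlt : P {x | g x < t₀} ≤ c := by
    have hU : {x | g x < t₀} = ⋃ n : ℕ, {x | g x ≤ t₀ - 1 / (n + 1)} := by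
      ext x
      simp only [Set.mem_setOf_eq, Set.mem_iUnion]
      constructor
      · intro h
        obtain ⟨n, hn⟩ := exists_nat_one_div_lt (show (0:ℝ) < t₀ - g x by linarith)
        exact ⟨n, by linarith⟩
      · rintro ⟨n, hn⟩
        have : (0:ℝ) < 1 / (n + 1) := by positivity
        linarith
    have hm : Monotone (fun n : ℕ => {x | g x ≤ t₀ - 1 / (n + 1)}) := by
      intro m n hmn x hx
      simp only [Set.mem_setOf_eq] at hx ⊢
      have : (1:ℝ) / (n + 1) ≤ 1 / (m + 1) := by
        apply one_div_le_one_div_of_le (by positivity)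
        exact_mod_cast Nat.add_le_add_right hmn 1
      linarith
    rw [hU, hm.measure_iUnion]
    refine iSup_le fun n => ?_
    have hnot : t₀ - 1 / (n + 1) ∉ S := fun hmem => by
      have := csInf_le hSbdd hmem
      have h1 : (0:ℝ) < 1 / (n + 1) := by positivity
      rw [← ht₀] at this
      linarith
    exact le_of_not_gt fun hlt => hnot hlt.le
  -- the bad event
  have hCmeas : MeasurableSet {ω : Fin N → Ω | ∀ i, g (ω i) < t₀} := by
    have : {ω : Fin N → Ω | ∀ i, g (ω i) < t₀}
        = Set.pi Set.univ (fun _ : Fin N => {x | g x < t₀}) := by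
      ext ω; simp [Set.mem_pi]
    rw [this]
    exact MeasurableSet.pi Set.countable_univ
      (fun i _ => hg measurableSet_Iio)
  have hCval : Measure.pi (fun _ : Fin N => P) {ω : Fin N → Ω | ∀ i, g (ω i) < t₀}
      = (P {x | g x < t₀}) ^ N := by
    have : {ω : Fin N → Ω | ∀ i, g (ω i) < t₀}
        = Set.pi Set.univ (fun _ : Fin N => {x | g x < t₀}) := by
      ext ω; simp [Set.mem_pi]
    rw [this, Measure.pi_pi]
    simp
  -- good set contains complement of bad set
  have hsub : {ω : Fin N → Ω | ∀ i, g (ω i) < t₀}ᶜ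
      ⊆ {ω : Fin N → Ω | c ≤ P {x | g x ≤ ⨆ i, g (ω i)}} := by
    intro ω hω
    simp only [Set.mem_compl_iff, Set.mem_setOf_eq, not_forall, not_lt] at hω
    obtain ⟨i, hi⟩ := hω
    have hbdd : BddAbove (Set.range fun i => g (ω i)) := (Set.finite_range _).bddAbove
    have hsup : t₀ ≤ ⨆ i, g (ω i) := le_trans hi (le_ciSup hbdd i)
    exact le_trans hFt₀ (hFmono hsup)
  -- numeric bound : (1-eps)^N ≤ eta
  have hnum : (1 - eps) ^ N ≤ eta := by
    have hL : (0:ℝ) ≤ Real.log (1 / eta) := Real.log_nonneg (by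
      rw [le_one_div (by norm_num) heta0]; simpa using heta1)
    have h1 : Real.log (1 / eta) ≤ eps * N := by
      have h2 : 2 / eps * (Real.log (1 / eta) + 1) * eps ≤ (N : ℝ) * eps := by
        exact mul_le_mul_of_nonneg_right hNbound heps0.le
      have h3 : 2 / eps * (Real.log (1 / eta) + 1) * eps
          = 2 * (Real.log (1 / eta) + 1) := by
        field_simp
      nlinarith
    have h4 : (1 - eps) ^ N ≤ Real.exp (-eps) ^ N := by
      apply pow_le_pow_left₀ (by linarith)
      linarith [Real.add_one_le_exp (-eps)]
    have h5 : Real.exp (-eps) ^ N = Real.exp (-(eps * N)) := by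
      rw [← Real.exp_nat_mul]; ring_nf
    have h6 : Real.exp (-(eps * N)) ≤ eta := by
      rw [← Real.exp_log heta0]
      apply Real.exp_le_exp.mpr
      have hlog : Real.log (1 / eta) = -Real.log eta := by
        rw [one_div, Real.log_inv]
      linarith
    calc (1 - eps) ^ N ≤ Real.exp (-eps) ^ N := h4
      _ = Real.exp (-(eps * N)) := h5
      _ ≤ eta := h6
  constructor
  · have key : Measure.pi (fun _ : Fin N => P) {ω : Fin N → Ω | ∀ i, g (ω i) < t₀}
        ≤ ENNReal.ofReal eta := by
      rw [hCval]
      calc (P {x | g x < t₀}) ^ N ≤ c ^ N := pow_le_pow_left' hFlt N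
        _ = ENNReal.ofReal ((1 - eps) ^ N) := by
            rw [hc, ENNReal.ofReal_pow (by linarith)]
        _ ≤ ENNReal.ofReal eta := ENNReal.ofReal_le_ofReal hnum
    calc 1 - ENNReal.ofReal eta
        ≤ 1 - Measure.pi (fun _ : Fin N => P) {ω : Fin N → Ω | ∀ i, g (ω i) < t₀} :=
          tsub_le_tsub_left key 1
      _ = Measure.pi (fun _ : Fin N => P) {ω : Fin N → Ω | ∀ i, g (ω i) < t₀}ᶜ := by
          rw [measure_compl hCmeas (measure_ne_top _ _), measure_univ]
      _ ≤ _ := measure_mono hsub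
  · intro ω hω zeta hzeta
    refine le_trans hω (measure_mono fun x hx => ?_)
    exact lt_of_le_of_lt hx hzeta
end
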